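/- arXiv:2401.03647 — 3 statements merged into one kernel-verified Lean document; each statement's English description precedes it below -/
import Mathlib

section
/- Fix d = 2. Let ω : ℤ² → {half, full} be an environment, where from a full site all four steps ±e₁, ±e₂ are allowed and from a half site only +e₁, +e₂ are allowed. Call a finite path γ starting at the origin ω-good if every −e₁ (left) step of γ is taken from a site where the environment allows it (i.e., from a full site). Given an ω-good path γ, define its westernisation γ̃ as the path of the same length such that γ̃ takes the same step as γ at every time when γ takes a +e₁ or −e₂ step, and at all other times γ̃ takes the step −e₁ if the environment at its current position allows it, and +e₂ otherwise. Then for all m ≥ 0: γ_m^{[1]} − γ̃_m^{[1]} = γ_m^{[2]} − γ̃_m^{[2]} ≥ 0. -/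
/-- Westernisation lemma (d = 2). Let `full : ℤ² → Prop` describe an
environment (full sites allow all four steps, half sites only `+e₁, +e₂`).
Let `γ` be an `ω`-good path from the origin (every `-e₁` step is taken from a
full site) and let `γt` be its westernisation: it takes the same step as `γ`
whenever `γ` takes a `+e₁` or `-e₂` step, and otherwise takes `-e₁` when the
environment at its current position allows it, and `+e₂` otherwise. Then for
all `m`: `γ_m^{[1]} - γt_m^{[1]} = γ_m^{[2]} - γt_m^{[2]} ≥ 0`. -/
theorem westernisation (full : ℤ × ℤ → Prop) (γ γt : ℕ → ℤ × ℤ)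
    (hγ0 : γ 0 = (0, 0)) (hγt0 : γt 0 = (0, 0))
    (hsteps : ∀ m, γ (m + 1) - γ m ∈
      ({(1, 0), (-1, 0), (0, 1), (0, -1)} : Set (ℤ × ℤ)))
    (hgood : ∀ m, γ (m + 1) - γ m = (-1, 0) → full (γ m))
    (hsync1 : ∀ m, γ (m + 1) - γ m = (1, 0) → γt (m + 1) - γt m = (1, 0))
    (hsync2 : ∀ m, γ (m + 1) - γ m = (0, -1) → γt (m + 1) - γt m = (0, -1))
    (hwest : ∀ m, (γ (m + 1) - γ m = (-1, 0) ∨ γ (m + 1) - γ m = (0, 1)) →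
      (full (γt m) → γt (m + 1) = γt m + (-1, 0)) ∧
      (¬ full (γt m) → γt (m + 1) = γt m + (0, 1))) :
    ∀ m, (γ m).1 - (γt m).1 = (γ m).2 - (γt m).2 ∧
      0 ≤ (γ m).1 - (γt m).1 := by
  intro m
  induction m with
  | zero => simp [hγ0, hγt0]
  | succ n ih =>
    obtain ⟨ihd, ihn⟩ := ih
    have hs := hsteps n
    simp only [Set.mem_insert_iff, Set.mem_singleton_iff] at hs
    rcases hs with h | h | h | h
    · have ht := hsync1 n h
      have e1 := congrArg Prod.fst h
      have e2 := congrArg Prod.snd h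
      have f1 := congrArg Prod.fst ht
      have f2 := congrArg Prod.snd ht
      simp only [Prod.fst_sub, Prod.snd_sub] at e1 e2 f1 f2
      constructor <;> omega
    · have e1 := congrArg Prod.fst h
      have e2 := congrArg Prod.snd h
      simp only [Prod.fst_sub, Prod.snd_sub] at e1 e2
      by_cases hf : full (γt n)
      · have ht := (hwest n (Or.inl h)).1 hf
        have f1 := congrArg Prod.fst ht
        have f2 := congrArg Prod.snd ht
        simp only [Prod.fst_add, Prod.snd_add] at f1 f2
        constructor <;> omega
      · have ht := (hwest n (Or.inl h)).2 hf
        have f1 := congrArg Prod.fst ht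
        have f2 := congrArg Prod.snd ht
        simp only [Prod.fst_add, Prod.snd_add] at f1 f2
        have hd : (γ n).1 - (γt n).1 ≠ 0 := by
          intro h0
          apply hf
          have heq : γ n = γt n := by
            apply Prod.ext <;> omega
          rw [← heq]
          exact hgood n h
        constructor <;> omega
    · have e1 := congrArg Prod.fst h
      have e2 := congrArg Prod.snd h
      simp only [Prod.fst_sub, Prod.snd_sub] at e1 e2
      by_cases hf : full (γt n)
      · have ht := (hwest n (Or.inr h)).1 hf
        have f1 := congrArg Prod.fst ht
        have f2 := congrArg Prod.snd ht
        simp only [Prod.fst_add, Prod.snd_add] at f1 f2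
        constructor <;> omega
      · have ht := (hwest n (Or.inr h)).2 hf
        have f1 := congrArg Prod.fst ht
        have f2 := congrArg Prod.snd ht
        simp only [Prod.fst_add, Prod.snd_add] at f1 f2
        constructor <;> omega
    · have ht := hsync2 n h
      have e1 := congrArg Prod.fst h
      have e2 := congrArg Prod.snd h
      have f1 := congrArg Prod.fst ht
      have f2 := congrArg Prod.snd ht
      simp only [Prod.fst_sub, Prod.snd_sub] at e1 e2 f1 f2
      constructor <;> omega
end

section
/- Fix d = 2 and the half-orthant environment on ℤ². Let 𝔠 be the cluster of the origin in the triangular-lattice oriented site percolation on half sites (occupied = half site, oriented connections in directions −e₁, +e₂, −e₁+e₂ within the quadrant {x : x^{[1]} ≤ 0, x^{[2]} ≥ 0}), defined by: 𝔠₀ = {0} if 0 is a half site (and 𝔠 = {0} if 0 is full); 𝔠_n = {x in the quadrant with ‖x‖₁ = n : x is a half site and ({x+e₁, x−e₂} ∩ 𝔠_{n−1} ≠ ∅ or x+e₁−e₂ ∈ 𝔠_{n−2})}; 𝔠 = ∪_n 𝔠_n. If 𝔠 is finite, then there exists a path from the origin 0 to −e₁, consistent with the environment, of length at most 4·|𝔠|.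 -/
/-!
Let `x` be a point of the finite cluster maximising `x₂ - x₁`. Its neighbours `x - e₁`, `x + e₂`,
`x - e₁ + e₂` are not half sites, since otherwise they would lie further out in the cluster, so
from `x` the steps `-e₁` and `-e₂` can be imitated by going around through these full sites, at a
cost of at most four extra steps. Promoting `x` to a full site removes it from the cluster, and
after cutting out loops a path in the promoted environment leaves `x` at most once; induction on
the size of the cluster finishes the proof.
-/

/-- In the half-orthant model (d = 2), the step `s` is allowed from site `y`:
`+e₁` and `+e₂` are always allowed; `-e₁` and `-e₂` are allowed only from
full (non-half) sites. -/
def allowedHO (half : ℤ × ℤ → Prop) (y s : ℤ × ℤ) : Prop :=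
  s = (1, 0) ∨ s = (0, 1) ∨ (¬ half y ∧ (s = (-1, 0) ∨ s = (0, -1)))

inductive ReachesWithin {α : Type*} (R : α → α → Prop) : ℕ → α → α → Prop
  | refl (n : ℕ) (a : α) : ReachesWithin R n a a
  | cons {n : ℕ} {a b c : α} : R a b → ReachesWithin R n b c → ReachesWithin R (n + 1) a c

namespace ReachesWithin

variable {α : Type*} {R R' : α → α → Prop} {k m n : ℕ} {a b c x : α}

theorem single (h : R a b) : ReachesWithin R 1 a b :=
  .cons h (.refl 0 b)

theorem mono (h : ReachesWithin R m a b) (hmn : m ≤ n) : ReachesWithin R n a b := by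
  induction h generalizing n with
  | refl => exact .refl n _
  | cons hab _ ih =>
    obtain ⟨n, rfl⟩ : ∃ n', n = n' + 1 := ⟨n - 1, by omega⟩
    exact .cons hab (ih (by omega))

theorem trans (hab : ReachesWithin R m a b) (hbc : ReachesWithin R n b c) :
    ReachesWithin R (m + n) a c := by
  induction hab with
  | refl => exact hbc.mono (by omega)
  | cons h _ ih => exact (ReachesWithin.cons h (ih hbc)).mono (by omega)

theorem exists_walk (h : ReachesWithin R n a b) :
    ∃ (L : ℕ) (γ : ℕ → α), L ≤ n ∧ γ 0 = a ∧ γ L = b ∧ ∀ m < L, R (γ m) (γ (m + 1)) := by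
  induction h with
  | refl n a => exact ⟨0, fun _ => a, Nat.zero_le n, rfl, rfl, by simp⟩
  | @cons n a b c hab _ ih =>
    obtain ⟨L, γ, hL, hγ0, hγL, hγ⟩ := ih
    refine ⟨L + 1, fun | 0 => a | m + 1 => γ m, by omega, rfl, hγL, ?_⟩
    rintro (_ | m) hm
    · simpa [hγ0] using hab
    · exact hγ m (by omega)

/-- Cutting out everything between the first and the last visit to `x`. -/
theorem imp_or_exit (hR : ∀ a b, a ≠ x → R' a b → R a b) (h : ReachesWithin R' n a b) :
    ReachesWithin R n a b ∨ ∃ i j c, i + j + 1 ≤ n ∧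
      ReachesWithin R i a x ∧ R' x c ∧ ReachesWithin R j c b := by
  induction h with
  | refl n a => exact .inl (.refl n a)
  | @cons n a a' b haa' _ ih =>
    by_cases hax : a = x
    · subst hax
      rcases ih with h | ⟨i, j, c, hij, -, hxc, hcb⟩
      · exact .inr ⟨0, n, a', by omega, .refl 0 a, haa', h⟩
      · exact .inr ⟨0, j, c, by omega, .refl 0 a, hxc, hcb⟩
    · rcases ih with h | ⟨i, j, c, hij, hax', hxc, hcb⟩
      · exact .inl (.cons (hR _ _ hax haa') h)
      · exact .inr ⟨i + 1, j, c, by omega, .cons (hR _ _ hax haa') hax', hxc, hcb⟩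

theorem reroute (hR : ∀ a b, a ≠ x → R' a b → R a b)
    (hx : ∀ b, R' x b → ReachesWithin R (k + 1) x b) (h : ReachesWithin R' n a b) :
    ReachesWithin R (n + k) a b := by
  rcases imp_or_exit hR h with h | ⟨i, j, c, hij, hax, hxc, hcb⟩
  · exact h.mono (by omega)
  · exact ((hax.trans (hx c hxc)).trans hcb).mono (by omega)

end ReachesWithin

namespace HalfOrthant

def ConsistentStep (half : ℤ × ℤ → Prop) (a b : ℤ × ℤ) : Prop :=
  allowedHO half a (b - a)

def promote (half : ℤ × ℤ → Prop) (x : ℤ × ℤ) : ℤ × ℤ → Prop :=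
  fun y => half y ∧ y ≠ x

structure IsAwesome (half : ℤ × ℤ → Prop) (x : ℤ × ℤ) : Prop where
  half_self : half x
  not_half_west : ¬ half (x + (-1, 0))
  not_half_north : ¬ half (x + (0, 1))
  not_half_northwest : ¬ half (x + (-1, 1))

def ClusterStep (half : ℤ × ℤ → Prop) (a b : ℤ × ℤ) : Prop :=
  half a ∧ half b ∧ (b = a + (-1, 0) ∨ b = a + (0, 1) ∨ b = a + (-1, 1))

/-- The cluster `𝔠` of the origin, described by reachability instead of by its levels `𝔠ₙ`. -/
def cluster (half : ℤ × ℤ → Prop) : Set (ℤ × ℤ) :=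
  {y | Relation.ReflTransGen (ClusterStep half) (0, 0) y}

variable {half : ℤ × ℤ → Prop} {a b x : ℤ × ℤ}

namespace ConsistentStep

theorem east (h : b - a = (1, 0)) : ConsistentStep half a b := .inl h

theorem north (h : b - a = (0, 1)) : ConsistentStep half a b := .inr (.inl h)

theorem west (ha : ¬ half a) (h : b - a = (-1, 0)) : ConsistentStep half a b :=
  .inr (.inr ⟨ha, .inl h⟩)

theorem south (ha : ¬ half a) (h : b - a = (0, -1)) : ConsistentStep half a b :=
  .inr (.inr ⟨ha, .inr h⟩)

theorem of_promote (hax : a ≠ x) (h : ConsistentStep (promote half x) a b) :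
    ConsistentStep half a b := by
  rcases h with h | h | ⟨ha, h⟩
  · exact .inl h
  · exact .inr (.inl h)
  · exact .inr (.inr ⟨fun h' => ha ⟨h', hax⟩, h⟩)

end ConsistentStep

namespace IsAwesome

theorem reachesWithin_west (hx : IsAwesome half x) :
    ReachesWithin (ConsistentStep half) 3 x (x + (-1, 0)) :=
  .cons (b := x + (0, 1)) (.north (by simp)) <|
    .cons (b := x + (-1, 1)) (.west hx.not_half_north (by simp)) <|
      .single (.south hx.not_half_northwest (by simp))

theorem reachesWithin_of_consistentStep_promote (hx : IsAwesome half x)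
    (h : ConsistentStep (promote half x) x b) :
    ReachesWithin (ConsistentStep half) 5 x b := by
  have hsouth : ReachesWithin (ConsistentStep half) 2 (x + (-1, 0)) (x + (0, -1)) :=
    .cons (b := x + (-1, -1)) (.south hx.not_half_west (by simp)) (.single (.east (by simp)))
  rcases h with h | h | ⟨-, h | h⟩
  · exact (ReachesWithin.single (.east h)).mono (by norm_num)
  · exact (ReachesWithin.single (.north h)).mono (by norm_num)
  · rw [← add_sub_cancel x b, h]
    exact hx.reachesWithin_west.mono (by norm_num)
  · rw [← add_sub_cancel x b, h]
    exact hx.reachesWithin_west.trans hsouth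

end IsAwesome

theorem half_of_mem_cluster (h0 : half (0, 0)) (hy : a ∈ cluster half) : half a := by
  induction hy with
  | refl => exact h0
  | tail _ hbc => exact hbc.2.1

theorem exists_isAwesome (h0 : half (0, 0)) (hfin : (cluster half).Finite) :
    ∃ x ∈ cluster half, IsAwesome half x := by
  obtain ⟨x, hx, hmax⟩ :=
    Set.exists_max_image _ (fun y : ℤ × ℤ => y.2 - y.1) hfin ⟨_, Relation.ReflTransGen.refl⟩
  have hxh := half_of_mem_cluster h0 hx
  refine ⟨x, hx, hxh, fun h => ?_, fun h => ?_, fun h => ?_⟩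
  · have := hmax _ (hx.tail ⟨hxh, h, .inl rfl⟩); simp at this; omega
  · have := hmax _ (hx.tail ⟨hxh, h, .inr (.inl rfl)⟩); simp at this
  · have := hmax _ (hx.tail ⟨hxh, h, .inr (.inr rfl)⟩); simp at this; omega

theorem cluster_promote_subset (hx0 : x ≠ (0, 0)) :
    cluster (promote half x) ⊆ cluster half \ {x} := by
  intro y hy
  induction hy with
  | refl => exact ⟨.refl, Ne.symm hx0⟩
  | tail _ hbc ih =>
    obtain ⟨⟨ha, -⟩, ⟨hb, hbx⟩, hdir⟩ := hbc
    exact ⟨ih.1.tail ⟨ha, hb, hdir⟩, hbx⟩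

theorem cluster_subset_iUnion {C : ℕ → Set (ℤ × ℤ)}
    (hC0 : C 0 = {(0, 0)})
    (hCn : ∀ n, 1 ≤ n → C n =
      {x : ℤ × ℤ | x.1 ≤ 0 ∧ 0 ≤ x.2 ∧ x.1.natAbs + x.2.natAbs = n ∧ half x ∧
        ((x + (1, 0) ∈ C (n - 1) ∨ x - (0, 1) ∈ C (n - 1)) ∨
          (2 ≤ n ∧ x + (1, 0) - (0, 1) ∈ C (n - 2)))}) :
    cluster half ⊆ ⋃ n, C n := by
  suffices ∀ y ∈ cluster half, y.1 ≤ 0 ∧ 0 ≤ y.2 ∧ y ∈ C (y.1.natAbs + y.2.natAbs) from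
    fun y hy => Set.mem_iUnion.2 ⟨_, (this y hy).2.2⟩
  intro y hy
  induction hy with
  | refl => simp [hC0]
  | @tail a b _ hab ih =>
    obtain ⟨p, q⟩ := a
    obtain ⟨hp, hq, haC⟩ := ih
    obtain ⟨-, hb, rfl | rfl | rfl⟩ := hab <;>
      refine ⟨by simp; omega, by simp; omega, ?_⟩ <;>
      rw [hCn _ (by simp; omega)] <;>
      refine ⟨by simp; omega, by simp; omega, rfl, hb, ?_⟩
    · exact .inl (.inl (by convert haC using 2 <;> simp; omega))
    · exact .inl (.inr (by convert haC using 2 <;> simp; omega))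
    · exact .inr ⟨by simp; omega, by convert haC using 2 <;> simp; omega⟩

theorem reachesWithin_west (h0 : half (0, 0)) (hfin : (cluster half).Finite) :
    ReachesWithin (ConsistentStep half) (4 * (cluster half).ncard) (0, 0) (-1, 0) := by
  induction hn : (cluster half).ncard using Nat.strong_induction_on generalizing half with
  | _ n ih =>
  obtain ⟨x, hx, hxa⟩ := exists_isAwesome h0 hfin
  have hpos : 0 < n := hn ▸ (Set.ncard_pos hfin).2 ⟨x, hx⟩
  by_cases hx0 : x = (0, 0)
  · subst hx0
    simpa using hxa.reachesWithin_west.mono (n := 4 * n) (by omega)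
  · have hsub := cluster_promote_subset (half := half) hx0
    have hlt : (cluster (promote half x)).ncard < n := hn ▸
      (Set.ncard_le_ncard hsub hfin.sdiff).trans_lt (Set.ncard_sdiff_singleton_lt_of_mem hx hfin)
    have h' := ih _ hlt ⟨h0, Ne.symm hx0⟩ (hfin.subset (hsub.trans Set.sdiff_subset)) rfl
    exact (h'.reroute (fun _ _ => ConsistentStep.of_promote)
      (fun _ => hxa.reachesWithin_of_consistentStep_promote)).mono (by omega)

end HalfOrthant

open HalfOrthant

theorem path_to_west_general (half : ℤ × ℤ → Prop) (C : ℕ → Set (ℤ × ℤ))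
    (hC0 : C 0 = {(0, 0)})
    (hCn : half (0, 0) → ∀ n, 1 ≤ n → C n =
      {x : ℤ × ℤ | x.1 ≤ 0 ∧ 0 ≤ x.2 ∧ x.1.natAbs + x.2.natAbs = n ∧ half x ∧
        ((x + (1, 0) ∈ C (n - 1) ∨ x - (0, 1) ∈ C (n - 1)) ∨
          (2 ≤ n ∧ x + (1, 0) - (0, 1) ∈ C (n - 2)))})
    (hfin : (⋃ n, C n).Finite) :
    ∃ (L : ℕ) (γ : ℕ → ℤ × ℤ), L ≤ 4 * hfin.toFinset.card ∧
      γ 0 = (0, 0) ∧ γ L = (-1, 0) ∧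
      ∀ m < L, allowedHO half (γ m) (γ (m + 1) - γ m) := by
  rw [← Set.ncard_eq_toFinset_card _ hfin]
  have hpos : 0 < (⋃ n, C n).ncard :=
    (Set.ncard_pos hfin).2 ⟨(0, 0), Set.mem_iUnion.2 ⟨0, by simp [hC0]⟩⟩
  by_cases h0 : half (0, 0)
  · have hsub := cluster_subset_iUnion hC0 (hCn h0)
    have hcard := Set.ncard_le_ncard hsub hfin
    exact ((reachesWithin_west h0 (hfin.subset hsub)).mono (by omega)).exists_walk
  · exact ((ReachesWithin.single (ConsistentStep.west h0 (by simp))).mono (by omega)).exists_walk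

/-- Let `C n` be the levels of the cluster of the origin for the
triangular-lattice oriented site percolation on half sites within the
northwest quadrant (connections in directions `-e₁`, `+e₂`, `-e₁+e₂`).
If the cluster `⋃ n, C n` is finite then there is a path from the origin to
`-e₁`, consistent with the environment, of length at most `4·|cluster|`. -/
theorem path_to_west (half : ℤ × ℤ → Prop) (C : ℕ → Set (ℤ × ℤ))
    (hC0 : C 0 = {(0, 0)})
    (hfull : ¬ half (0, 0) → ∀ n, 1 ≤ n → C n = ∅)
    (hCn : half (0, 0) → ∀ n, 1 ≤ n → C n =
      {x : ℤ × ℤ | x.1 ≤ 0 ∧ 0 ≤ x.2 ∧ x.1.natAbs + x.2.natAbs = n ∧ half x ∧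
        ((x + (1, 0) ∈ C (n - 1) ∨ x - (0, 1) ∈ C (n - 1)) ∨
          (2 ≤ n ∧ x + (1, 0) - (0, 1) ∈ C (n - 2)))})
    (hfin : (⋃ n, C n).Finite) :
    ∃ (L : ℕ) (γ : ℕ → ℤ × ℤ), L ≤ 4 * hfin.toFinset.card ∧
      γ 0 = (0, 0) ∧ γ L = (-1, 0) ∧
      ∀ m < L, allowedHO half (γ m) (γ (m + 1) - γ m) :=
  path_to_west_general half C hC0 hCn hfin
end

section
/- Fix d ≥ 2. Let 0 < p < 1. For each n, let B_n be the set of self-avoiding nearest-neighbour paths in ℤ^d from the origin to the point n·u, where u ∈ ℚ^d with ‖u‖₁ = 1 and u^{[1]} = −(1−δ) with |δ| < ε, whose lengths lie in [n, (1+ε)n]. For a path γ of length k with exactly w steps in direction −e₁, the number of such paths is at most C(k, k−w)·(2d−1)^{k−w}, every path in B_n has w ∈ [n(1−δ), k], and consequently |B_n| ≤ (1+nε)·(1+n(ε+δ))·C(⌊(1+ε)n⌋, ⌈n(ε+δ)⌉)·(2d−1)^{n(ε+δ)}, provided 1 − 2δ − ε > 0. -/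
open Finset

/-- The unit step of `ℤ^d` encoded by a coordinate and a sign
(`true` = positive direction). -/
def stepVec (d : ℕ) (s : Fin d × Bool) : Fin d → ℤ :=
  fun j => if j = s.1 then (if s.2 then 1 else -1) else 0

/-- Position after `m` steps of the step sequence `s`. -/
def posAt (d L : ℕ) (s : Fin L → Fin d × Bool) (m : ℕ) : Fin d → ℤ :=
  ∑ i ∈ Finset.range m, if h : i < L then stepVec d (s ⟨i, h⟩) else 0

open Classical in
/-- The set of self-avoiding nearest-neighbour paths of length `L` from the
origin to `z` with exactly `w` steps in direction `-e₁`, encoded as step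
sequences. -/
noncomputable def pathSet (d : ℕ) [NeZero d] (z : Fin d → ℤ) (L w : ℕ) :
    Finset (Fin L → Fin d × Bool) :=
  Finset.univ.filter (fun s =>
    Function.Injective (fun m : Fin (L + 1) => posAt d L s (m : ℕ)) ∧
    posAt d L s L = z ∧
    (Finset.univ.filter (fun i : Fin L => s i = (0, false))).card = w)

/-!
A step sequence with exactly `w` steps `-e₁` is determined by the set of its other `k - w` steps
and their directions, each one of `2d - 1`. The first coordinate of the endpoint is at least
`-w`, so `w ≥ n(1 - δ)`, whence `k - w ≤ n(ε + δ) ≤ n(1 - δ) ≤ w`; the last inequality is what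
lets unimodality of binomial coefficients give `C(k, k - w) ≤ C(⌊(1 + ε)n⌋, ⌈n(ε + δ)⌉)`.
Finally there are at most `1 + nε` lengths `k` and `1 + n(ε + δ)` admissible values of `w`.
-/

namespace Nat

theorem choose_le_choose_of_le_of_le_half {n r s : ℕ} (hrs : r ≤ s) (hs : s ≤ n / 2) :
    n.choose r ≤ n.choose s := by
  induction s, hrs using Nat.le_induction with
  | base => exact le_rfl
  | succ t _ ih => exact (ih (by omega)).trans (choose_le_succ_of_lt_half_left (by omega))

theorem choose_le_choose_of_le_of_add_le {n r s : ℕ} (hrs : r ≤ s) (h : r + s ≤ n) :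
    n.choose r ≤ n.choose s := by
  rcases le_or_gt s (n / 2) with hs | hs
  · exact choose_le_choose_of_le_of_le_half hrs hs
  · rw [← choose_symm (by omega : s ≤ n)]
    exact choose_le_choose_of_le_of_le_half (by omega) (by omega)

theorem cast_card_Icc_le {R : Type*} [Field R] [LinearOrder R] [IsStrictOrderedRing R]
    {a b : ℕ} {x y : R} (hxa : x ≤ a) (hby : b ≤ y) (hxy : x ≤ y + 1) :
    (#(Icc a b) : R) ≤ y + 1 - x := by
  rw [Nat.card_Icc]
  rcases le_or_gt a (b + 1) with hab | hab
  · rw [Nat.cast_sub hab]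
    push_cast
    linarith
  · rw [Nat.sub_eq_zero_of_le hab.le, Nat.cast_zero]
    linarith

end Nat

theorem card_filter_card_filter_ne_le {ι α : Type*} [Fintype ι] [DecidableEq ι] [Fintype α]
    [DecidableEq α] (a : α) (m : ℕ) :
    #{s : ι → α | #{i | s i ≠ a} = m} ≤ (Fintype.card ι).choose m * (Fintype.card α - 1) ^ m := by
  set pattern : Finset ι → Finset (ι → α) :=
    fun T => Fintype.piFinset fun i => if i ∈ T then {a}ᶜ else {a}
  have card_pattern : ∀ T, #(pattern T) = (Fintype.card α - 1) ^ #T := by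
    intro T
    simp [pattern, apply_ite Finset.card, card_compl, prod_ite_mem]
  have subset : ({s : ι → α | #{i | s i ≠ a} = m} : Finset (ι → α)) ⊆
      (univ.powersetCard m).biUnion pattern := by
    intro s hs
    rw [mem_filter] at hs
    refine mem_biUnion.mpr
      ⟨({i | s i ≠ a} : Finset ι), mem_powersetCard.mpr ⟨subset_univ _, hs.2⟩, ?_⟩
    simp only [pattern, Fintype.mem_piFinset]
    intro i
    by_cases h : s i = a <;> simp [h]
  calc #{s : ι → α | #{i | s i ≠ a} = m}
      ≤ #((univ.powersetCard m).biUnion pattern) := card_le_card subset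
    _ ≤ #(univ.powersetCard m) * (Fintype.card α - 1) ^ m :=
        card_biUnion_le_card_mul _ _ _ fun T hT => by
          rw [card_pattern, (mem_powersetCard.mp hT).2]
    _ = _ := by rw [card_powersetCard, card_univ]

section PathSet

variable {d : ℕ}

theorem neg_le_stepVec_apply (x : Fin d × Bool) (j : Fin d) :
    -(if x = (j, false) then 1 else 0) ≤ stepVec d x j := by
  obtain ⟨a, b⟩ := x
  by_cases h : j = a
  · cases b <;> simp [stepVec, h]
  · simp [stepVec, h, Ne.symm h]

theorem posAt_length (L : ℕ) (s : Fin L → Fin d × Bool) :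
    posAt d L s L = ∑ i : Fin L, stepVec d (s i) := by
  rw [posAt, ← Fin.sum_univ_eq_sum_range]
  simp

theorem neg_card_le_posAt_length (L : ℕ) (s : Fin L → Fin d × Bool) (j : Fin d) :
    -(#{i | s i = (j, false)} : ℤ) ≤ posAt d L s L j := by
  rw [posAt_length, Finset.sum_apply, card_filter, Nat.cast_sum, ← sum_neg_distrib]
  exact sum_le_sum fun i _ => by exact_mod_cast neg_le_stepVec_apply (s i) j

variable [NeZero d] {z : Fin d → ℤ}

theorem one_le_two_mul_sub_one : (1 : ℝ) ≤ 2 * d - 1 := by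
  have : (1 : ℝ) ≤ d := by exact_mod_cast NeZero.one_le
  linarith

theorem card_pathSet_le (k w : ℕ) :
    #(pathSet d z k w) ≤ k.choose (k - w) * (2 * d - 1) ^ (k - w) := by
  have subset : pathSet d z k w ⊆
      ({s : Fin k → Fin d × Bool | #{i | s i ≠ (0, false)} = k - w} : Finset _) := by
    intro s hs
    simp only [pathSet, mem_filter, mem_univ, true_and, ne_eq] at hs ⊢
    obtain ⟨-, -, hw⟩ := hs
    have hsplit := card_filter_add_card_filter_not (s := univ) (p := fun i => s i = (0, false))
    rw [card_univ, Fintype.card_fin] at hsplit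
    omega
  have card_steps : Fintype.card (Fin d × Bool) = 2 * d := by simp [mul_comm]
  calc #(pathSet d z k w) ≤ _ := card_le_card subset
    _ ≤ _ := card_filter_card_filter_ne_le _ _
    _ = _ := by rw [card_steps, Fintype.card_fin]

theorem cast_card_pathSet_le (k w : ℕ) :
    (#(pathSet d z k w) : ℝ) ≤ (k.choose (k - w) : ℝ) * (2 * (d : ℝ) - 1) ^ (k - w) := by
  have hd : 1 ≤ 2 * d := by have := NeZero.one_le (n := d); omega
  calc (#(pathSet d z k w) : ℝ) ≤ ((k.choose (k - w) * (2 * d - 1) ^ (k - w) : ℕ) : ℝ) := by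
        exact_mod_cast card_pathSet_le k w
    _ = _ := by
      rw [Nat.cast_mul, Nat.cast_pow, Nat.cast_sub hd, Nat.cast_mul, Nat.cast_ofNat, Nat.cast_one]

theorem neg_le_of_mem_pathSet {L w : ℕ} {s : Fin L → Fin d × Bool} (hs : s ∈ pathSet d z L w) :
    -z 0 ≤ w := by
  simp only [pathSet, mem_filter, mem_univ, true_and] at hs
  obtain ⟨-, hend, hw⟩ := hs
  exact neg_le.mp (by simpa [hend, hw] using neg_card_le_posAt_length L s 0)

theorem le_of_mem_pathSet {L w : ℕ} {s : Fin L → Fin d × Bool} (hs : s ∈ pathSet d z L w) :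
    w ≤ L := by
  simp only [pathSet, mem_filter, mem_univ, true_and] at hs
  exact hs.2.2 ▸ (card_filter_le _ _).trans_eq (card_fin L)

theorem mul_one_sub_le_of_mem_pathSet {n : ℕ} {δ : ℝ} (hz0 : ((z 0 : ℤ) : ℝ) = -(1 - δ) * n)
    {L w : ℕ} {s : Fin L → Fin d × Bool} (hs : s ∈ pathSet d z L w) : (n : ℝ) * (1 - δ) ≤ w := by
  have : (-z 0 : ℝ) ≤ w := by exact_mod_cast neg_le_of_mem_pathSet hs
  linarith

theorem card_pathSet_le_choose_mul_rpow {K k w : ℕ} {x : ℝ} (hkK : k ≤ K) (hwk : w ≤ k)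
    (hkw : (k : ℝ) ≤ w + x) (hxw : x ≤ w) :
    (#(pathSet d z k w) : ℝ) ≤ (K.choose ⌈x⌉₊ : ℝ) * (2 * (d : ℝ) - 1) ^ x := by
  have hjx : ((k - w : ℕ) : ℝ) ≤ x := by
    rw [Nat.cast_sub hwk]
    linarith
  have hj : k - w ≤ ⌈x⌉₊ := Nat.cast_le.mp (hjx.trans (Nat.le_ceil x))
  have hchoose : k.choose (k - w) ≤ K.choose ⌈x⌉₊ :=
    (Nat.choose_le_choose _ hkK).trans
      (Nat.choose_le_choose_of_le_of_add_le hj (by have := Nat.ceil_le.mpr hxw; omega))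
  calc (#(pathSet d z k w) : ℝ) ≤ (k.choose (k - w) : ℝ) * (2 * (d : ℝ) - 1) ^ (k - w) :=
        cast_card_pathSet_le k w
    _ ≤ _ := by
      have hbase := one_le_two_mul_sub_one (d := d)
      rw [← Real.rpow_natCast]
      exact mul_le_mul (by exact_mod_cast hchoose) (Real.rpow_le_rpow_of_exponent_le hbase hjx)
        (by positivity) (by positivity)

theorem sum_card_pathSet_le {n : ℕ} {ε δ : ℝ} (hδ : |δ| < ε) (hcond : 0 < 1 - 2 * δ - ε)
    (hz0 : ((z 0 : ℤ) : ℝ) = -(1 - δ) * n) :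
    (∑ k ∈ Icc n ⌊(1 + ε) * (n : ℝ)⌋₊, ∑ w ∈ range (k + 1), (#(pathSet d z k w) : ℝ)) ≤
      (1 + n * ε) * (1 + n * (ε + δ)) *
        (⌊(1 + ε) * (n : ℝ)⌋₊.choose ⌈(n : ℝ) * (ε + δ)⌉₊ : ℝ) *
        (2 * (d : ℝ) - 1) ^ ((n : ℝ) * (ε + δ)) := by
  obtain ⟨hδl, -⟩ := abs_lt.mp hδ
  have hε : 0 < ε := (abs_nonneg δ).trans_lt hδ
  have hn : (0 : ℝ) ≤ n := n.cast_nonneg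
  set K := ⌊(1 + ε) * (n : ℝ)⌋₊
  set c := ⌈(n : ℝ) * (1 - δ)⌉₊
  set M := (K.choose ⌈(n : ℝ) * (ε + δ)⌉₊ : ℝ) * (2 * (d : ℝ) - 1) ^ ((n : ℝ) * (ε + δ))
  have hK : (K : ℝ) ≤ (1 + ε) * n := Nat.floor_le (by nlinarith)
  have hM : 0 ≤ M :=
    mul_nonneg (Nat.cast_nonneg _) (Real.rpow_nonneg (zero_le_one.trans one_le_two_mul_sub_one) _)
  have hk : ∀ k ∈ Icc n K, (k : ℝ) ≤ (1 + ε) * n :=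
    fun k hk => (Nat.cast_le.mpr (mem_Icc.mp hk).2).trans hK
  have restrict : ∀ k, ∑ w ∈ range (k + 1), (#(pathSet d z k w) : ℝ) =
      ∑ w ∈ Icc c k, (#(pathSet d z k w) : ℝ) := by
    refine fun k => (sum_subset (fun w hw => ?_) fun w hw hwc => ?_).symm
    · simp only [mem_Icc, mem_range] at hw ⊢
      omega
    · rw [Nat.cast_eq_zero, card_eq_zero, ← not_nonempty_iff_eq_empty]
      rintro ⟨s, hs⟩
      exact hwc (mem_Icc.mpr ⟨Nat.ceil_le.mpr (mul_one_sub_le_of_mem_pathSet hz0 hs),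
        Nat.lt_succ_iff.mp (mem_range.mp hw)⟩)
  have term_le : ∀ k ∈ Icc n K, ∀ w ∈ Icc c k, (#(pathSet d z k w) : ℝ) ≤ M := by
    intro k hk' w hw
    have hw' : (n : ℝ) * (1 - δ) ≤ w := Nat.ceil_le.mp (mem_Icc.mp hw).1
    exact card_pathSet_le_choose_mul_rpow (mem_Icc.mp hk').2 (mem_Icc.mp hw).2
      (by linarith [hk k hk']) (by nlinarith)
  have count_w : ∀ k ∈ Icc n K, (#(Icc c k) : ℝ) ≤ 1 + n * (ε + δ) := by
    intro k hk'
    have := Nat.cast_card_Icc_le (Nat.le_ceil ((n : ℝ) * (1 - δ))) (hk k hk') (by nlinarith)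
    linarith
  have count_k : (#(Icc n K) : ℝ) ≤ 1 + n * ε := by
    have := Nat.cast_card_Icc_le (a := n) le_rfl hK (by nlinarith)
    linarith
  calc _ = ∑ k ∈ Icc n K, ∑ w ∈ Icc c k, (#(pathSet d z k w) : ℝ) :=
        sum_congr rfl fun k _ => restrict k
    _ ≤ ∑ k ∈ Icc n K, (1 + n * (ε + δ)) * M := sum_le_sum fun k hk =>
        (sum_le_card_nsmul _ _ _ (term_le k hk)).trans
          (by rw [nsmul_eq_mul]; exact mul_le_mul_of_nonneg_right (count_w k hk) hM)
    _ ≤ (1 + n * ε) * ((1 + n * (ε + δ)) * M) := by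
        rw [sum_const, nsmul_eq_mul]
        exact mul_le_mul_of_nonneg_right count_k (mul_nonneg (by nlinarith) hM)
    _ = _ := by ring

end PathSet

theorem path_counting_general (d : ℕ) [NeZero d] (n : ℕ)
    (ε δ : ℝ) (hδ : |δ| < ε) (hcond : 0 < 1 - 2 * δ - ε)
    (z : Fin d → ℤ) (hz0 : ((z 0 : ℤ) : ℝ) = -(1 - δ) * n) :
    (∀ k w : ℕ, ((pathSet d z k w).card : ℝ) ≤
        (k.choose (k - w) : ℝ) * (2 * (d : ℝ) - 1) ^ (k - w)) ∧
    (∀ k w : ℕ, n ≤ k → (k : ℝ) ≤ (1 + ε) * n → (pathSet d z k w).Nonempty →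
        (n : ℝ) * (1 - δ) ≤ (w : ℝ) ∧ w ≤ k) ∧
    (∑ k ∈ Finset.Icc n ⌊(1 + ε) * (n : ℝ)⌋₊, ∑ w ∈ Finset.range (k + 1),
        ((pathSet d z k w).card : ℝ)) ≤
      (1 + (n : ℝ) * ε) * (1 + (n : ℝ) * (ε + δ)) *
        (Nat.choose ⌊(1 + ε) * (n : ℝ)⌋₊ ⌈(n : ℝ) * (ε + δ)⌉₊ : ℝ) *
        (2 * (d : ℝ) - 1) ^ ((n : ℝ) * (ε + δ)) :=
  ⟨cast_card_pathSet_le,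
    fun _ _ _ _ ⟨_, hs⟩ => ⟨mul_one_sub_le_of_mem_pathSet hz0 hs, le_of_mem_pathSet hs⟩,
    sum_card_pathSet_le hδ hcond hz0⟩

/-- Path counting bounds: the number of self-avoiding paths of length `k`
(from the origin to `z`, with `‖z‖₁ = n` and `z^{[1]} = -(1-δ)n`) with
exactly `w` steps in direction `-e₁` is at most `C(k,k-w)·(2d-1)^{k-w}`;
every such path with `k ∈ [n,(1+ε)n]` has `w ∈ [n(1-δ), k]`; and hence
`|B_n| ≤ (1+nε)(1+n(ε+δ))·C(⌊(1+ε)n⌋, ⌈n(ε+δ)⌉)·(2d-1)^{n(ε+δ)}`, provided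
`1 - 2δ - ε > 0`. -/
theorem path_counting (d : ℕ) (hd : 2 ≤ d) [NeZero d] (n : ℕ) (hn : 1 ≤ n)
    (ε δ : ℝ) (hε : 0 < ε) (hδ : |δ| < ε) (hcond : 0 < 1 - 2 * δ - ε)
    (z : Fin d → ℤ) (hz0 : ((z 0 : ℤ) : ℝ) = -(1 - δ) * n)
    (hz1 : ∑ i, (z i).natAbs = n) :
    (∀ k w : ℕ, ((pathSet d z k w).card : ℝ) ≤
        (k.choose (k - w) : ℝ) * (2 * (d : ℝ) - 1) ^ (k - w)) ∧
    (∀ k w : ℕ, n ≤ k → (k : ℝ) ≤ (1 + ε) * n → (pathSet d z k w).Nonempty →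
        (n : ℝ) * (1 - δ) ≤ (w : ℝ) ∧ w ≤ k) ∧
    (∑ k ∈ Finset.Icc n ⌊(1 + ε) * (n : ℝ)⌋₊, ∑ w ∈ Finset.range (k + 1),
        ((pathSet d z k w).card : ℝ)) ≤
      (1 + (n : ℝ) * ε) * (1 + (n : ℝ) * (ε + δ)) *
        (Nat.choose ⌊(1 + ε) * (n : ℝ)⌋₊ ⌈(n : ℝ) * (ε + δ)⌉₊ : ℝ) *
        (2 * (d : ℝ) - 1) ^ ((n : ℝ) * (ε + δ)) :=
  path_counting_general d n ε δ hδ hcond z hz0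
end
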